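/- arXiv:2512.16719 — 2 statements merged into one kernel-verified Lean document; each statement's English description precedes it below -/
import Mathlib

section
/- Singular value thresholding solves the nuclear-norm proximal problem: if T = UΣVᵀ is a singular value decomposition of an m×n real matrix T and τ > 0, then D_τ(T) := U·max(Σ - τI, 0)·Vᵀ is the unique minimizer of L ↦ ‖L‖_* + (1/(2τ))‖L - T‖_F². -/
/-!
Let `C := min(Σ/τ, 1)` entrywise and `W := U C Vᵀ`. Then `T - D = τ W`, `W` is a contraction,
and `⟨W, D⟩_F = ‖D‖_*` because `C` is `1` wherever the shrunk singular values are nonzero and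
the nuclear norm is invariant under `A ↦ U A Vᵀ`. Every contraction satisfies
`⟨W, L⟩_F ≤ ‖L‖_*` (Cauchy–Schwarz column by column in an orthonormal eigenbasis of `LᵀL`), so
expanding the square gives
`g L = g D + (‖L‖_* - ⟨W, L⟩_F) + ‖L - D‖_F² / (2τ) ≥ g D + ‖L - D‖_F² / (2τ)`.
-/

open scoped BigOperators
open Matrix

/-- Nuclear norm: sum of singular values of `A` (square roots of eigenvalues of `AᵀA`). -/
noncomputable def nuclearNorm {m n : ℕ} (A : Matrix (Fin m) (Fin n) ℝ) : ℝ :=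
  ∑ i, Real.sqrt ((show (Aᵀ * A).IsHermitian by
    simpa using Matrix.isHermitian_conjTranspose_mul_self A).eigenvalues i)

def frobSq {m n : ℕ} (A : Matrix (Fin m) (Fin n) ℝ) : ℝ := ∑ i, ∑ j, (A i j) ^ 2

lemma isHermitian_transpose_mul_self {m n : ℕ} (A : Matrix (Fin m) (Fin n) ℝ) :
    (Aᵀ * A).IsHermitian := by
  simpa using isHermitian_conjTranspose_mul_self A

-- Passing to the roots of the characteristic polynomial frees the nuclear norm from the
-- noncanonical indexing of `eigenvalues`.
lemma nuclearNorm_eq_sum_sqrt_roots {m n : ℕ} (A : Matrix (Fin m) (Fin n) ℝ) :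
    nuclearNorm A = ((Aᵀ * A).charpoly.roots.map Real.sqrt).sum := by
  rw [(isHermitian_transpose_mul_self A).roots_charpoly_eq_eigenvalues, Multiset.map_map,
    ← Finset.sum_eq_multiset_sum]
  rfl

lemma nuclearNorm_eq_of_charpoly_eq {k m n : ℕ} {A : Matrix (Fin m) (Fin n) ℝ}
    {B : Matrix (Fin k) (Fin n) ℝ} (h : (Aᵀ * A).charpoly = (Bᵀ * B).charpoly) :
    nuclearNorm A = nuclearNorm B := by
  rw [nuclearNorm_eq_sum_sqrt_roots, nuclearNorm_eq_sum_sqrt_roots, h]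

lemma nuclearNorm_mul_mul_transpose {k m n : ℕ} {U : Matrix (Fin k) (Fin m) ℝ}
    {V : Matrix (Fin n) (Fin n) ℝ} (hU : Uᵀ * U = 1) (hV : Vᵀ * V = 1)
    (A : Matrix (Fin m) (Fin n) ℝ) : nuclearNorm (U * A * Vᵀ) = nuclearNorm A := by
  refine nuclearNorm_eq_of_charpoly_eq ?_
  have : (U * A * Vᵀ)ᵀ * (U * A * Vᵀ) = V * (Aᵀ * A * Vᵀ) := by
    simp only [transpose_mul, transpose_transpose, Matrix.mul_assoc]
    rw [← Matrix.mul_assoc Uᵀ, hU, Matrix.one_mul]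
  rw [this, charpoly_mul_comm, Matrix.mul_assoc, hV, Matrix.mul_one]

lemma nuclearNorm_of_transpose_mul_self_eq_diagonal {m n : ℕ} {A : Matrix (Fin m) (Fin n) ℝ}
    {d : Fin n → ℝ} (h : Aᵀ * A = diagonal d) : nuclearNorm A = ∑ j, √(d j) := by
  rw [nuclearNorm_eq_sum_sqrt_roots, h, charpoly_diagonal, Polynomial.roots_prod _ _
    (Finset.prod_ne_zero_iff.mpr fun j _ => Polynomial.X_sub_C_ne_zero (d j))]
  simp only [Polynomial.roots_X_sub_C, Multiset.bind_singleton, Multiset.map_map]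
  rfl

def IsRectDiagonal {m n : ℕ} (A : Matrix (Fin m) (Fin n) ℝ) : Prop :=
  ∀ (i : Fin m) (j : Fin n), (i : ℕ) ≠ (j : ℕ) → A i j = 0

namespace IsRectDiagonal

variable {m n : ℕ} {A : Matrix (Fin m) (Fin n) ℝ}

lemma map (hA : IsRectDiagonal A) {f : ℝ → ℝ} (hf : f 0 = 0) :
    IsRectDiagonal (of fun i j => f (A i j)) := fun i j hij => by
  simp [hA i j hij, hf]

lemma transpose_mul_self (hA : IsRectDiagonal A) :
    Aᵀ * A = diagonal fun j => ∑ i, A i j ^ 2 := by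
  ext j k
  rcases eq_or_ne j k with rfl | hjk
  · simp [mul_apply, sq]
  · rw [mul_apply, diagonal_apply_ne _ hjk]
    refine Finset.sum_eq_zero fun i _ => ?_
    by_cases hij : (i : ℕ) = j
    · rw [transpose_apply, hA i k (fun hik => hjk (Fin.ext (hij ▸ hik))), mul_zero]
    · rw [transpose_apply, hA i j hij, zero_mul]

lemma sum_col {f : ℝ → ℝ} (hf : f 0 = 0) (hA : IsRectDiagonal A) (j : Fin n) :
    ∑ i, f (A i j) = if h : (j : ℕ) < m then f (A ⟨j, h⟩ j) else 0 := by
  split_ifs with h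
  · refine Fintype.sum_eq_single _ fun i hi => ?_
    rw [hA i j fun hij => hi (Fin.ext hij), hf]
  · exact Fintype.sum_eq_zero _ fun i => by rw [hA i j (by omega), hf]

lemma nuclearNorm_eq (hA : IsRectDiagonal A) : nuclearNorm A = ∑ i, ∑ j, |A i j| := by
  rw [nuclearNorm_of_transpose_mul_self_eq_diagonal hA.transpose_mul_self, Finset.sum_comm]
  refine Finset.sum_congr rfl fun j _ => ?_
  rw [hA.sum_col (f := (· ^ 2)) (zero_pow two_ne_zero), hA.sum_col abs_zero]
  split_ifs
  · exact Real.sqrt_sq_eq_abs _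
  · exact Real.sqrt_zero

end IsRectDiagonal

section FrobeniusInner

variable {ι ι' κ κ' : Type*} [Fintype ι] [Fintype ι'] [Fintype κ] [Fintype κ']

def frobInner (A B : Matrix ι κ ℝ) : ℝ := ∑ i, ∑ j, A i j * B i j

lemma frobInner_eq_trace (A B : Matrix ι κ ℝ) : frobInner A B = trace (Aᵀ * B) := by
  simp only [frobInner, trace, diag, mul_apply, transpose_apply]
  exact Finset.sum_comm

lemma frobInner_eq_sum_dotProduct_col (A B : Matrix ι κ ℝ) :
    frobInner A B = ∑ j, Aᵀ j ⬝ᵥ Bᵀ j := by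
  rw [frobInner, Finset.sum_comm]
  rfl

lemma frobInner_mul_left [DecidableEq ι] {U : Matrix ι' ι ℝ} (hU : Uᵀ * U = 1)
    (A B : Matrix ι κ ℝ) : frobInner (U * A) (U * B) = frobInner A B := by
  rw [frobInner_eq_trace, frobInner_eq_trace, transpose_mul, Matrix.mul_assoc,
    ← Matrix.mul_assoc Uᵀ, hU, Matrix.one_mul]

lemma frobInner_mul_right [DecidableEq κ] {Q : Matrix κ κ' ℝ} (hQ : Q * Qᵀ = 1)
    (A B : Matrix ι κ ℝ) : frobInner (A * Q) (B * Q) = frobInner A B := by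
  rw [frobInner_eq_trace, frobInner_eq_trace, transpose_mul, Matrix.mul_assoc,
    ← Matrix.mul_assoc Aᵀ, trace_mul_comm, Matrix.mul_assoc (Aᵀ * B), hQ, Matrix.mul_one]

end FrobeniusInner

section Contraction

variable {ι κ μ : Type*} [Fintype ι] [Fintype κ] [Fintype μ]

def IsContraction (W : Matrix ι κ ℝ) : Prop := ∀ x : κ → ℝ, (W *ᵥ x) ⬝ᵥ (W *ᵥ x) ≤ x ⬝ᵥ x

lemma dotProduct_mulVec_self (A : Matrix ι κ ℝ) (x : κ → ℝ) :
    (A *ᵥ x) ⬝ᵥ (A *ᵥ x) = x ⬝ᵥ (Aᵀ * A) *ᵥ x := by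
  rw [← mulVec_mulVec, dotProduct_mulVec x, vecMul_transpose]

lemma isContraction_of_transpose_mul_self_eq_one [DecidableEq κ] {U : Matrix ι κ ℝ}
    (hU : Uᵀ * U = 1) : IsContraction U := fun x => by
  rw [dotProduct_mulVec_self, hU, one_mulVec]

lemma IsContraction.mul {W : Matrix ι κ ℝ} {W' : Matrix κ μ ℝ} (hW : IsContraction W)
    (hW' : IsContraction W') : IsContraction (W * W') := fun x => by
  rw [← mulVec_mulVec]
  exact (hW _).trans (hW' x)

end Contraction

lemma dotProduct_le_sqrt_mul_sqrt {ι : Type*} [Fintype ι] (v w : ι → ℝ) :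
    v ⬝ᵥ w ≤ √(v ⬝ᵥ v) * √(w ⬝ᵥ w) := by
  simpa only [dotProduct, sq] using Real.sum_mul_le_sqrt_mul_sqrt Finset.univ v w

lemma IsRectDiagonal.isContraction {m n : ℕ} {A : Matrix (Fin m) (Fin n) ℝ}
    (hA : IsRectDiagonal A) (h1 : ∀ i j, |A i j| ≤ 1) : IsContraction A := fun x => by
  have hcol : ∀ j, ∑ i, A i j ^ 2 ≤ 1 := fun j => by
    rw [hA.sum_col (f := (· ^ 2)) (zero_pow two_ne_zero)]
    split_ifs
    · exact (sq_le_one_iff_abs_le_one _).mpr (h1 _ _)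
    · exact zero_le_one
  rw [dotProduct_mulVec_self, hA.transpose_mul_self]
  simp only [dotProduct, mulVec_diagonal]
  exact Finset.sum_le_sum fun j _ => by nlinarith [hcol j, mul_self_nonneg (x j)]

lemma IsContraction.frobInner_le_nuclearNorm {m n : ℕ} {W : Matrix (Fin m) (Fin n) ℝ}
    (hW : IsContraction W) (L : Matrix (Fin m) (Fin n) ℝ) : frobInner W L ≤ nuclearNorm L := by
  have hH := isHermitian_transpose_mul_self L
  set Q : Matrix (Fin n) (Fin n) ℝ := (hH.eigenvectorUnitary : Matrix (Fin n) (Fin n) ℝ)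
  have hQ : Qᵀ * Q = 1 := by
    simpa [star_eq_conjTranspose] using Unitary.coe_star_mul_self hH.eigenvectorUnitary
  have hQ' : Q * Qᵀ = 1 := mul_eq_one_comm.mp hQ
  have hunit : ∀ j, Qᵀ j ⬝ᵥ Qᵀ j = 1 := fun j => by
    simpa [mul_apply, dotProduct] using congr_fun₂ hQ j j
  have hLQ : ∀ j, (L *ᵥ Qᵀ j) ⬝ᵥ (L *ᵥ Qᵀ j) = hH.eigenvalues j := fun j => by
    have hev : (Lᵀ * L) *ᵥ Qᵀ j = hH.eigenvalues j • Qᵀ j := hH.mulVec_eigenvectorBasis j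
    rw [dotProduct_mulVec_self, hev, dotProduct_smul, hunit, smul_eq_mul, mul_one]
  calc frobInner W L = frobInner (W * Q) (L * Q) := (frobInner_mul_right hQ' W L).symm
    _ = ∑ j, (W *ᵥ Qᵀ j) ⬝ᵥ (L *ᵥ Qᵀ j) := frobInner_eq_sum_dotProduct_col _ _
    _ ≤ ∑ j, √((W *ᵥ Qᵀ j) ⬝ᵥ (W *ᵥ Qᵀ j)) * √(hH.eigenvalues j) :=
      Finset.sum_le_sum fun j _ => hLQ j ▸ dotProduct_le_sqrt_mul_sqrt _ _
    _ ≤ ∑ j, √(hH.eigenvalues j) := by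
      gcongr with j
      refine mul_le_of_le_one_left (Real.sqrt_nonneg _) (Real.sqrt_le_one.mpr ?_)
      exact (hW _).trans (hunit j).le
    _ = nuclearNorm L := rfl

section NuclearProx

variable {m n : ℕ}

lemma frobSq_nonneg (A : Matrix (Fin m) (Fin n) ℝ) : 0 ≤ frobSq A := by
  unfold frobSq
  positivity

lemma frobSq_eq_zero_iff {A : Matrix (Fin m) (Fin n) ℝ} : frobSq A = 0 ↔ A = 0 := by
  simp [frobSq, Fintype.sum_eq_zero_iff_of_nonneg, sq_nonneg, Pi.le_def, funext_iff,
    Finset.sum_nonneg, ← Matrix.ext_iff]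

lemma frobSq_sub_of_eq_add_smul {tau : ℝ} {T D W : Matrix (Fin m) (Fin n) ℝ}
    (hT : T = D + tau • W) (L : Matrix (Fin m) (Fin n) ℝ) :
    frobSq (L - T) =
      frobSq (L - D) - 2 * tau * (frobInner W L - frobInner W D) + frobSq (D - T) := by
  subst hT
  simp only [frobSq, frobInner, Matrix.sub_apply, Matrix.add_apply, Matrix.smul_apply, smul_eq_mul,
    Finset.mul_sum, ← Finset.sum_sub_distrib, ← Finset.sum_add_distrib]
  exact Finset.sum_congr rfl fun i _ => Finset.sum_congr rfl fun j _ => by ring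

-- `W` is a subgradient of the nuclear norm at `D`, and `hT` is the optimality condition
-- `0 ∈ D - T + τ ∂‖D‖_*`.
theorem nuclearProx_unique_min_of_subgradient {tau : ℝ} (htau : 0 < tau)
    {T D W : Matrix (Fin m) (Fin n) ℝ} (hW : IsContraction W)
    (hWD : frobInner W D = nuclearNorm D) (hT : T = D + tau • W) :
    let g := fun L : Matrix (Fin m) (Fin n) ℝ => nuclearNorm L + 1 / (2 * tau) * frobSq (L - T)
    (∀ L, g D ≤ g L) ∧ ∀ L, (∀ M, g L ≤ g M) → L = D := by
  intro g
  have key : ∀ L,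
      g L = g D + (nuclearNorm L - frobInner W L) + 1 / (2 * tau) * frobSq (L - D) := by
    intro L
    simp only [g, frobSq_sub_of_eq_add_smul hT L, ← hWD]
    field_simp
    ring
  have hcoef : 0 < 1 / (2 * tau) := by positivity
  have hgap : ∀ L, g D + 1 / (2 * tau) * frobSq (L - D) ≤ g L := fun L => by
    linarith [key L, hW.frobInner_le_nuclearNorm L]
  refine ⟨fun L => ?_, fun L hL => ?_⟩
  · linarith [hgap L, mul_nonneg hcoef.le (frobSq_nonneg (L - D))]
  · have hzero : frobSq (L - D) = 0 :=
      le_antisymm (nonpos_of_mul_nonpos_right (by linarith [hgap L, hL D]) hcoef) (frobSq_nonneg _)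
    exact sub_eq_zero.mp (frobSq_eq_zero_iff.mp hzero)

end NuclearProx

section SoftThreshold

variable {tau : ℝ}

lemma max_sub_zero_add_mul_min_div_one (htau : 0 < tau) (s : ℝ) :
    max (s - tau) 0 + tau * min (s / tau) 1 = s := by
  rcases le_total s tau with h | h
  · rw [max_eq_right (by linarith), min_eq_left ((div_le_one htau).mpr h)]
    field_simp
    ring
  · rw [max_eq_left (by linarith), min_eq_right ((one_le_div htau).mpr h)]
    ring

lemma min_div_one_mul_max_sub_zero (htau : 0 < tau) (s : ℝ) :
    min (s / tau) 1 * max (s - tau) 0 = max (s - tau) 0 := by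
  rcases le_total s tau with h | h
  · rw [max_eq_right (by linarith), mul_zero]
  · rw [min_eq_right ((one_le_div htau).mpr h), one_mul]

end SoftThreshold

/-- singular value thresholding `D_τ(T) = U·max(Σ-τI,0)·Vᵀ` is the unique
minimizer of `L ↦ ‖L‖_* + (1/(2τ))‖L - T‖_F²`, for an SVD `T = UΣVᵀ` with `U, V`
orthogonal and `Σ` (rectangular) diagonal with nonnegative entries. -/
theorem singular_value_thresholding_solves_nuclear_prox {m n : ℕ} (tau : ℝ) (htau : 0 < tau)
    (T : Matrix (Fin m) (Fin n) ℝ)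
    (U : Matrix (Fin m) (Fin m) ℝ) (V : Matrix (Fin n) (Fin n) ℝ)
    (S : Matrix (Fin m) (Fin n) ℝ)
    (hU : Uᵀ * U = 1) (hV : Vᵀ * V = 1)
    (hSdiag : ∀ (i : Fin m) (j : Fin n), (i : ℕ) ≠ (j : ℕ) → S i j = 0)
    (hSnonneg : ∀ i j, 0 ≤ S i j)
    (hT : T = U * S * Vᵀ) :
    let Sshrunk : Matrix (Fin m) (Fin n) ℝ := Matrix.of fun i j => max (S i j - tau) 0
    let D : Matrix (Fin m) (Fin n) ℝ := U * Sshrunk * Vᵀ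
    let g : Matrix (Fin m) (Fin n) ℝ → ℝ := fun L =>
      nuclearNorm L + (1 / (2 * tau)) * frobSq (L - T)
    (∀ L, g D ≤ g L) ∧ (∀ L, (∀ M, g L ≤ g M) → L = D) := by
  intro Sshrunk D g
  let C : Matrix (Fin m) (Fin n) ℝ := of fun i j => min (S i j / tau) 1
  have hCdiag : IsRectDiagonal C :=
    IsRectDiagonal.map (f := fun s => min (s / tau) 1) hSdiag (by simp)
  have hSshdiag : IsRectDiagonal Sshrunk :=
    IsRectDiagonal.map (f := fun s => max (s - tau) 0) hSdiag (by simp [htau.le])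
  have hC1 : ∀ i j, |C i j| ≤ 1 := fun i j =>
    abs_le.mpr ⟨le_min (by linarith [div_nonneg (hSnonneg i j) htau.le]) (by norm_num),
      min_le_right _ _⟩
  have hVt : Vᵀ * (Vᵀ)ᵀ = 1 := by rw [transpose_transpose]; exact hV
  have hW : IsContraction (U * C * Vᵀ) :=
    ((isContraction_of_transpose_mul_self_eq_one hU).mul (hCdiag.isContraction hC1)).mul
      (isContraction_of_transpose_mul_self_eq_one (mul_eq_one_comm.mp hVt))
  have hWD : frobInner (U * C * Vᵀ) D = nuclearNorm D := by
    change frobInner (U * C * Vᵀ) (U * Sshrunk * Vᵀ) = nuclearNorm (U * Sshrunk * Vᵀ)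
    rw [frobInner_mul_right hVt, frobInner_mul_left hU, nuclearNorm_mul_mul_transpose hU hV,
      hSshdiag.nuclearNorm_eq]
    refine Finset.sum_congr rfl fun i _ => Finset.sum_congr rfl fun j _ => ?_
    rw [abs_of_nonneg (le_max_right _ _)]
    exact min_div_one_mul_max_sub_zero htau (S i j)
  have hTD : T = D + tau • (U * C * Vᵀ) := by
    rw [hT, show D = U * Sshrunk * Vᵀ from rfl, ← Matrix.smul_mul, ← Matrix.mul_smul,
      ← Matrix.add_mul, ← Matrix.mul_add]
    congr 2
    ext i j
    exact (max_sub_zero_add_mul_min_div_one htau (S i j)).symm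
  exact nuclearProx_unique_min_of_subgradient htau hW hWD hTD
end

section
/- Let f, g : ℝ^{m×n} → ℝ be convex functions, Ĥ a fixed matrix, and suppose sequences (L_k), (S_k), (Y_k) of m×n matrices converge to (L*, S*, Y*) along a subsequence, with L_k + S_k - Ĥ → 0, Y_k ∈ ∂g(S_k) for all k, and dist(Y_k, ∂f(L_k)) → 0. Then L* + S* = Ĥ, Y* ∈ ∂g(S*), and Y* ∈ ∂f(L*), i.e., (L*, S*, Y*) satisfies the KKT conditions of the problem min f(L) + g(S) subject to L + S = Ĥ. -/
open scoped BigOperators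
open Filter

/-- Trace inner product `⟨A,B⟩ = trace(AᵀB) = Σᵢⱼ Aᵢⱼ Bᵢⱼ`. -/
def tinner {m n : ℕ} (A B : Matrix (Fin m) (Fin n) ℝ) : ℝ := ∑ i, ∑ j, A i j * B i j

/-- Convex subdifferential of `f` at `L` w.r.t. the trace inner product. -/
def subdiff {m n : ℕ} (f : Matrix (Fin m) (Fin n) ℝ → ℝ) (L : Matrix (Fin m) (Fin n) ℝ) :
    Set (Matrix (Fin m) (Fin n) ℝ) :=
  {Y | ∀ M, f M ≥ f L + tinner Y (M - L)}

lemma tinner_tendsto {m n : ℕ} {A B : ℕ → Matrix (Fin m) (Fin n) ℝ}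
    {A' B' : Matrix (Fin m) (Fin n) ℝ}
    (hA : Tendsto A atTop (nhds A')) (hB : Tendsto B atTop (nhds B')) :
    Tendsto (fun k => tinner (A k) (B k)) atTop (nhds (tinner A' B')) := by
  unfold tinner
  refine tendsto_finset_sum _ fun i _ => tendsto_finset_sum _ fun j _ => Tendsto.mul ?_ ?_
  · exact (((continuous_id.matrix_elem i j)).tendsto A').comp hA
  · exact (((continuous_id.matrix_elem i j)).tendsto B').comp hB

attribute [local instance] Matrix.normedAddCommGroup Matrix.normedSpace

/-- limit points of ADMM-type iterates satisfy the KKT conditions of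
`min f(L) + g(S)` s.t. `L + S = Ĥ`. -/
theorem kkt_limit_point {m n : ℕ} (f g : Matrix (Fin m) (Fin n) ℝ → ℝ)
    (hf : ConvexOn ℝ Set.univ f) (hg : ConvexOn ℝ Set.univ g)
    (H : Matrix (Fin m) (Fin n) ℝ)
    (L S Y : ℕ → Matrix (Fin m) (Fin n) ℝ)
    (Lstar Sstar Ystar : Matrix (Fin m) (Fin n) ℝ)
    (φ : ℕ → ℕ) (hφ : StrictMono φ)
    (hL : Tendsto (fun k => L (φ k)) atTop (nhds Lstar))
    (hS : Tendsto (fun k => S (φ k)) atTop (nhds Sstar))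
    (hYlim : Tendsto (fun k => Y (φ k)) atTop (nhds Ystar))
    (hfeas : Tendsto (fun k => L k + S k - H) atTop (nhds 0))
    (hYg : ∀ k, Y k ∈ subdiff g (S k))
    (Z : ℕ → Matrix (Fin m) (Fin n) ℝ)
    (hZ : ∀ k, Z k ∈ subdiff f (L k))
    (hYZ : Tendsto (fun k => Y k - Z k) atTop (nhds 0)) :
    Lstar + Sstar = H ∧ Ystar ∈ subdiff g Sstar ∧ Ystar ∈ subdiff f Lstar := by
  have hcf : Continuous f := hf.locallyLipschitz.continuous
  have hcg : Continuous g := hg.locallyLipschitz.continuous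
  have hZlim : Tendsto (fun k => Z (φ k)) atTop (nhds Ystar) := by
    have h1 : Tendsto (fun k => Y (φ k) - Z (φ k)) atTop (nhds 0) :=
      hYZ.comp (hφ.tendsto_atTop)
    have := hYlim.sub h1
    simpa using this
  refine ⟨?_, ?_, ?_⟩
  · have h1 : Tendsto (fun k => L (φ k) + S (φ k) - H) atTop (nhds 0) :=
      hfeas.comp (hφ.tendsto_atTop)
    have h2 : Tendsto (fun k => L (φ k) + S (φ k) - H) atTop (nhds (Lstar + Sstar - H)) :=
      (hL.add hS).sub tendsto_const_nhds
    have := tendsto_nhds_unique h2 h1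
    have : Lstar + Sstar - H + H = 0 + H := by rw [this]
    simpa using this
  · intro M
    have hlim : Tendsto (fun k => g (S (φ k)) + tinner (Y (φ k)) (M - S (φ k)))
        atTop (nhds (g Sstar + tinner Ystar (M - Sstar))) :=
      (hcg.continuousAt.tendsto.comp hS).add
        (tinner_tendsto hYlim (tendsto_const_nhds.sub hS))
    exact le_of_tendsto hlim (Eventually.of_forall fun k => hYg (φ k) M)
  · intro M
    have hlim : Tendsto (fun k => f (L (φ k)) + tinner (Z (φ k)) (M - L (φ k)))
        atTop (nhds (f Lstar + tinner Ystar (M - Lstar))) :=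
      (hcf.continuousAt.tendsto.comp hL).add
        (tinner_tendsto hZlim (tendsto_const_nhds.sub hL))
    exact le_of_tendsto hlim (Eventually.of_forall fun k => hZ (φ k) M)
end
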